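/- Let π be a continuous piecewise linear minimal valid function, and let π' be a minimal valid function with E(π) ⊆ E(π'). Then π' is Lipschitz continuous on ℝ. -/

import Mathlib

/-- A finite-support function `y : ℝ → ℕ` is feasible if `∑ r, r·y(r) − f ∈ ℤ`. -/
def Feasible (f : ℝ) (y : ℝ →₀ ℕ) : Prop :=
  ∃ z : ℤ, (∑ r ∈ y.support, r * (y r : ℝ)) - f = (z : ℝ)

/-- `π` is a valid function: nonnegative, and `∑ r, π(r)·y(r) ≥ 1` for every feasible `y`. -/
def Valid (f : ℝ) (π : ℝ → ℝ) : Prop :=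
  (∀ x, 0 ≤ π x) ∧
    ∀ y : ℝ →₀ ℕ, Feasible f y → 1 ≤ ∑ r ∈ y.support, π r * (y r : ℝ)

/-- A valid function is minimal if no other valid function is pointwise ≤ it. -/
def MinimalValid (f : ℝ) (π : ℝ → ℝ) : Prop :=
  Valid f π ∧ ¬ ∃ π' : ℝ → ℝ, Valid f π' ∧ (∀ x, π' x ≤ π x) ∧ π' ≠ π

/-- `P(π)`: the set of feasible `y` with `∑ r, π(r)·y(r) = 1`. -/
def Pset (f : ℝ) (π : ℝ → ℝ) : Set (ℝ →₀ ℕ) :=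
  {y | Feasible f y ∧ ∑ r ∈ y.support, π r * (y r : ℝ) = 1}

/-- `E(π) = {(x,y) : π(x) + π(y) = π(x+y)}`. -/
def Eset (π : ℝ → ℝ) : Set (ℝ × ℝ) :=
  {p | π p.1 + π p.2 = π (p.1 + p.2)}

/-- A valid function `π` is a facet if every valid `π'` with `P(π) ⊆ P(π')` equals `π`. -/
def IsFacet (f : ℝ) (π : ℝ → ℝ) : Prop :=
  Valid f π ∧ ∀ π' : ℝ → ℝ, Valid f π' → Pset f π ⊆ Pset f π' → π' = π

/-- A valid function `π` is a weak facet if every valid `π'` with `P(π) ⊆ P(π')`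
has `P(π) = P(π')`. -/
def IsWeakFacet (f : ℝ) (π : ℝ → ℝ) : Prop :=
  Valid f π ∧ ∀ π' : ℝ → ℝ, Valid f π' → Pset f π ⊆ Pset f π' → Pset f π = Pset f π'

/-- A valid function `π` is extreme if whenever `π = (π¹ + π²)/2` with `π¹, π²` valid,
then `π¹ = π² = π`. -/
def ExtremeFunc (f : ℝ) (π : ℝ → ℝ) : Prop :=
  Valid f π ∧ ∀ π₁ π₂ : ℝ → ℝ, Valid f π₁ → Valid f π₂ →
    (∀ x, π x = (π₁ x + π₂ x) / 2) → π₁ = π ∧ π₂ = π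

/-- `π` is piecewise linear: there is a closed, discrete set `B ⊆ ℝ` of breakpoints
such that `π` is affine on each connected component of `ℝ \ B`. -/
def PiecewiseLinear (π : ℝ → ℝ) : Prop :=
  ∃ B : Set ℝ, IsClosed B ∧
    (∀ x ∈ B, ∃ ε > (0 : ℝ), ∀ y ∈ B, |y - x| < ε → y = x) ∧
    (∀ x ∉ B, ∃ a b : ℝ, ∀ z ∈ connectedComponentIn Bᶜ x, π z = a * z + b)

/-- `π` is continuous piecewise linear. -/
def ContPiecewiseLinear (π : ℝ → ℝ) : Prop :=
  PiecewiseLinear π ∧ Continuous π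

/-!
Minimality makes `π'` nonnegative and subadditive, and makes `π 0 = 0`, so the continuous
piecewise linear `π` is linear on `[0, ε]` and on `[-ε, 0]`. Hence `E(π)`, and so `E(π')`,
contains every pair of points of either interval whose sum stays in it: `π'` is additive there,
and a nonnegative function additive on `[0, ε]` is at most `(2 π'(ε) / ε) t` at `t`. Subadditivity
spreads such a bound `π' t ≤ C |t|` from `[-ε, ε]` to all of `ℝ`, via `π' t ≤ n π' (t / n)`, and
turns it into `|π' x - π' y| ≤ C |x - y|`.
-/

open Set Function

noncomputable def weight (φ : ℝ → ℝ) : (ℝ →₀ ℕ) →+ ℝ :=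
  Finsupp.liftAddHom fun r => (AddMonoidHom.mulLeft (φ r)).comp (Nat.castAddMonoidHom ℝ)

lemma weight_apply (φ : ℝ → ℝ) (y : ℝ →₀ ℕ) :
    weight φ y = ∑ r ∈ y.support, φ r * (y r : ℝ) :=
  Finsupp.liftAddHom_apply _ _

lemma weight_single (φ : ℝ → ℝ) (r : ℝ) (n : ℕ) : weight φ (Finsupp.single r n) = φ r * n :=
  Finsupp.liftAddHom_apply_single _ _ _

lemma feasible_iff_weight {f : ℝ} {y : ℝ →₀ ℕ} :
    Feasible f y ↔ ∃ z : ℤ, weight id y - f = z := by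
  simp only [weight_apply, id, Feasible]

lemma valid_iff_weight {f : ℝ} {π : ℝ → ℝ} :
    Valid f π ↔ (∀ x, 0 ≤ π x) ∧ ∀ y, Feasible f y → 1 ≤ weight π y := by
  simp only [weight_apply, Valid]

lemma weight_nonneg {φ : ℝ → ℝ} (hφ : ∀ x, 0 ≤ φ x) (y : ℝ →₀ ℕ) : 0 ≤ weight φ y := by
  rw [weight_apply]
  exact Finset.sum_nonneg fun r _ => mul_nonneg (hφ r) (Nat.cast_nonneg _)

lemma weight_eq_erase_add (φ : ℝ → ℝ) (y : ℝ →₀ ℕ) (c : ℝ) :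
    weight φ y = weight φ (y.erase c) + φ c * y c := by
  conv_lhs => rw [← Finsupp.erase_add_single c y]
  rw [map_add, weight_single]

lemma weight_update_erase (φ : ℝ → ℝ) (y : ℝ →₀ ℕ) (c v : ℝ) :
    weight (update φ c v) (y.erase c) = weight φ (y.erase c) := by
  simp only [weight_apply]
  refine Finset.sum_congr rfl fun r hr => ?_
  classical
  rw [Finsupp.support_erase] at hr
  rw [update_of_ne (Finset.ne_of_mem_erase hr)]

/-- In a feasible `y`, trade the copies of `weight id w` for copies of `w`. -/
lemma Valid.update_weight {f : ℝ} {π : ℝ → ℝ} (hπ : Valid f π) (w : ℝ →₀ ℕ) :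
    Valid f (update π (weight id w) (weight π w)) := by
  set c := weight id w
  rw [valid_iff_weight] at hπ ⊢
  refine ⟨fun x => ?_, fun y hy => ?_⟩
  · rcases eq_or_ne x c with rfl | hx
    · simpa using weight_nonneg hπ.1 w
    · simpa [hx] using hπ.1 x
  · have trade : ∀ φ, weight φ (y.erase c + y c • w) = weight φ (y.erase c) + y c * weight φ w :=
      fun φ => by rw [map_add, map_nsmul, nsmul_eq_mul]
    have hfeas : Feasible f (y.erase c + y c • w) := by
      rw [feasible_iff_weight, weight_eq_erase_add id y c] at hy
      rw [feasible_iff_weight, trade]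
      simpa only [id, c, mul_comm] using hy
    calc (1 : ℝ) ≤ weight π (y.erase c + y c • w) := hπ.2 _ hfeas
      _ = weight (update π c (weight π w)) y := by
        rw [trade, weight_eq_erase_add _ y c, weight_update_erase, update_self, mul_comm]

lemma MinimalValid.le_of_valid_update {f : ℝ} {π : ℝ → ℝ} (hπ : MinimalValid f π) {c v : ℝ}
    (hv : Valid f (update π c v)) : π c ≤ v := by
  by_contra! hlt
  refine hπ.2 ⟨_, hv, fun x => ?_, fun h => hlt.ne (by simpa using congrFun h c)⟩
  rcases eq_or_ne x c with rfl | hx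
  · simpa using hlt.le
  · simp [hx]

lemma MinimalValid.map_zero {f : ℝ} {π : ℝ → ℝ} (hπ : MinimalValid f π) : π 0 = 0 :=
  le_antisymm (by simpa using hπ.le_of_valid_update (hπ.1.update_weight 0)) (hπ.1.1 0)

lemma MinimalValid.map_add_le {f : ℝ} {π : ℝ → ℝ} (hπ : MinimalValid f π) (a b : ℝ) :
    π (a + b) ≤ π a + π b := by
  have := hπ.le_of_valid_update (hπ.1.update_weight (Finsupp.single a 1 + Finsupp.single b 1))
  simpa [weight_single] using this

lemma exists_isolating_radius {B : Set ℝ} (hB : IsClosed B)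
    (hdisc : ∀ x ∈ B, ∃ ε > (0 : ℝ), ∀ y ∈ B, |y - x| < ε → y = x) (x : ℝ) :
    ∃ ε > (0 : ℝ), ∀ y ∈ B, |y - x| < ε → y = x := by
  by_cases hx : x ∈ B
  · exact hdisc x hx
  · obtain ⟨ε, hε, hball⟩ := Metric.isOpen_iff.mp hB.isOpen_compl x hx
    exact ⟨ε, hε, fun y hy hyx => absurd hy (hball (by rwa [Metric.mem_ball, Real.dist_eq]))⟩

lemma exists_eqOn_affine_Icc_of_Ioo_subset_compl {π : ℝ → ℝ} {B : Set ℝ} (hcont : Continuous π)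
    (haff : ∀ x ∉ B, ∃ a b : ℝ, ∀ z ∈ connectedComponentIn Bᶜ x, π z = a * z + b)
    {u v : ℝ} (huv : u < v) (hB : Ioo u v ⊆ Bᶜ) :
    ∃ a b : ℝ, EqOn π (fun z => a * z + b) (Icc u v) := by
  have hmid : (u + v) / 2 ∈ Ioo u v := ⟨by linarith, by linarith⟩
  obtain ⟨a, b, hab⟩ := haff _ (hB hmid)
  have hIoo : EqOn π (fun z => a * z + b) (Ioo u v) := fun z hz =>
    hab z (isPreconnected_Ioo.subset_connectedComponentIn hmid hB hz)
  refine ⟨a, b, ?_⟩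
  rw [← closure_Ioo huv.ne]
  exact hIoo.closure hcont (by fun_prop)

lemma ContPiecewiseLinear.exists_eqOn_affine_Icc {π : ℝ → ℝ} (hπ : ContPiecewiseLinear π) (x : ℝ) :
    ∃ ε > (0 : ℝ), (∃ a b : ℝ, EqOn π (fun z => a * z + b) (Icc x (x + ε))) ∧
      ∃ a b : ℝ, EqOn π (fun z => a * z + b) (Icc (x - ε) x) := by
  obtain ⟨⟨B, hBcl, hdisc, haff⟩, hcont⟩ := hπ
  obtain ⟨ε, hε, hiso⟩ := exists_isolating_radius hBcl hdisc x
  have hcompl : ∀ y, y ≠ x → |y - x| < ε → y ∈ Bᶜ := fun y hne hy hyB => hne (hiso y hyB hy)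
  refine ⟨ε, hε, exists_eqOn_affine_Icc_of_Ioo_subset_compl hcont haff (by linarith) fun y hy => ?_,
    exists_eqOn_affine_Icc_of_Ioo_subset_compl hcont haff (by linarith) fun y hy => ?_⟩
  · exact hcompl y hy.1.ne' (abs_lt.mpr ⟨by linarith [hy.1], by linarith [hy.2]⟩)
  · exact hcompl y hy.2.ne (abs_lt.mpr ⟨by linarith [hy.1], by linarith [hy.2]⟩)

lemma mem_Eset_of_eqOn_affine {π : ℝ → ℝ} {s : Set ℝ} {a b : ℝ}
    (h : EqOn π (fun z => a * z + b) s) (h0 : 0 ∈ s) (hπ0 : π 0 = 0) :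
    ∀ x ∈ s, ∀ y ∈ s, x + y ∈ s → (x, y) ∈ Eset π := by
  intro x hx y hy hxy
  have hb : b = 0 := by simpa [hπ0] using (h h0).symm
  simp only [Eset, mem_ofPred_eq, h hx, h hy, h hxy, hb]
  ring

section

variable {φ : ℝ → ℝ}

lemma le_mul_of_additiveOn_Icc {δ : ℝ} (hδ : 0 < δ) (hφ : ∀ x, 0 ≤ φ x)
    (hadd : ∀ x ∈ Icc 0 δ, ∀ y ∈ Icc 0 δ, x + y ∈ Icc 0 δ → φ (x + y) = φ x + φ y)
    {x : ℝ} (hx : 0 ≤ x) (hxδ : x ≤ δ) : φ x ≤ 2 * φ δ / δ * x := by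
  have hadd' : ∀ x y, 0 ≤ x → 0 ≤ y → x + y ≤ δ → φ (x + y) = φ x + φ y :=
    fun x y hx hy hxy => hadd x ⟨hx, by linarith⟩ y ⟨hy, by linarith⟩ ⟨by linarith, hxy⟩
  have hmul : ∀ n : ℕ, n * x ≤ δ → φ (n * x) = n * φ x := by
    intro n
    induction n with
    | zero => intro _; simpa using hadd' 0 0 le_rfl le_rfl (by simpa using hδ.le)
    | succ n ih =>
      intro hn
      have hnx : n * x ≤ δ := le_trans (by gcongr; simp) hn
      rw [Nat.cast_succ, add_mul, one_mul,
        hadd' _ _ (by positivity) hx (by simpa [add_mul] using hn), ih hnx]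
      ring
  rcases hx.eq_or_lt with rfl | hx
  · simpa using (hmul 0 (by simpa using hδ.le)).le
  set n := ⌊δ / x⌋₊
  have hn1 : (1 : ℝ) ≤ n := by
    exact_mod_cast Nat.le_floor (by rw [Nat.cast_one, one_le_div hx]; exact hxδ)
  have hnx : n * x ≤ δ := (le_div_iff₀ hx).mp (Nat.floor_le (by positivity))
  have hδnx : δ < (n + 1) * x := (div_lt_iff₀ hx).mp (Nat.lt_floor_add_one _)
  have hφn : n * φ x ≤ φ δ := by
    have := hadd' (n * x) (δ - n * x) (by positivity) (by linarith) (by linarith)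
    rw [add_sub_cancel, hmul n hnx] at this
    linarith [hφ (δ - n * x)]
  rw [div_mul_eq_mul_div, le_div_iff₀ hδ]
  calc φ x * δ ≤ φ x * ((n + 1) * x) := by gcongr; exact hφ x
    _ ≤ 2 * (n * φ x) * x := by
      nlinarith [mul_le_mul_of_nonneg_right (by linarith : (n : ℝ) + 1 ≤ 2 * n)
        (mul_nonneg (hφ x) hx.le)]
    _ ≤ 2 * φ δ * x := by gcongr

lemma exists_le_mul_abs_of_additiveOn_Icc {δ : ℝ} (hδ : 0 < δ) (hφ : ∀ x, 0 ≤ φ x)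
    (hright : ∀ x ∈ Icc 0 δ, ∀ y ∈ Icc 0 δ, x + y ∈ Icc 0 δ → φ (x + y) = φ x + φ y)
    (hleft : ∀ x ∈ Icc (-δ) 0, ∀ y ∈ Icc (-δ) 0, x + y ∈ Icc (-δ) 0 → φ (x + y) = φ x + φ y) :
    ∃ C, 0 ≤ C ∧ ∀ t, |t| ≤ δ → φ t ≤ C * |t| := by
  have hleft' : ∀ x ∈ Icc 0 δ, ∀ y ∈ Icc 0 δ, x + y ∈ Icc 0 δ →
      φ (-(x + y)) = φ (-x) + φ (-y) := by
    intro x hx y hy hxy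
    rw [neg_add]
    exact hleft (-x) ⟨by linarith [hx.2], by linarith [hx.1]⟩
      (-y) ⟨by linarith [hy.2], by linarith [hy.1]⟩ ⟨by linarith [hxy.2], by linarith [hxy.1]⟩
  refine ⟨max (2 * φ δ / δ) (2 * φ (-δ) / δ),
    le_max_of_le_left (div_nonneg (by linarith [hφ δ]) hδ.le), fun t ht => ?_⟩
  rcases le_total 0 t with h | h
  · rw [abs_of_nonneg h] at ht ⊢
    exact (le_mul_of_additiveOn_Icc hδ hφ hright h ht).trans
      (mul_le_mul_of_nonneg_right (le_max_left _ _) h)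
  · rw [abs_of_nonpos h] at ht ⊢
    have := le_mul_of_additiveOn_Icc (φ := fun s => φ (-s)) hδ (fun s => hφ (-s)) hleft'
      (neg_nonneg.mpr h) ht
    rw [neg_neg] at this
    exact this.trans (mul_le_mul_of_nonneg_right (le_max_right _ _) (neg_nonneg.mpr h))

lemma le_nat_succ_mul_of_subadditive (hsub : ∀ a b, φ (a + b) ≤ φ a + φ b) (n : ℕ) (t : ℝ) :
    φ ((n + 1) * t) ≤ (n + 1) * φ t := by
  induction n with
  | zero => simp
  | succ n ih =>
    calc φ ((↑(n + 1) + 1) * t) ≤ φ ((n + 1) * t) + φ t := by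
          rw [Nat.cast_succ, add_mul (_ + 1 : ℝ), one_mul]; exact hsub _ _
      _ ≤ (↑(n + 1) + 1) * φ t := by push_cast; linarith

lemma le_mul_abs_of_subadditive (hsub : ∀ a b, φ (a + b) ≤ φ a + φ b) {δ C : ℝ} (hδ : 0 < δ)
    (hloc : ∀ t, |t| ≤ δ → φ t ≤ C * |t|) (t : ℝ) : φ t ≤ C * |t| := by
  set n := ⌊|t| / δ⌋₊
  have hn : (0 : ℝ) < n + 1 := by positivity
  have hsmall : |t / (n + 1)| ≤ δ := by
    rw [abs_div, abs_of_pos hn, div_le_iff₀ hn, mul_comm, ← div_le_iff₀ hδ]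
    exact (Nat.lt_floor_add_one _).le
  calc φ t = φ ((n + 1) * (t / (n + 1))) := by rw [mul_div_cancel₀ _ hn.ne']
    _ ≤ (n + 1) * φ (t / (n + 1)) := le_nat_succ_mul_of_subadditive hsub n _
    _ ≤ (n + 1) * (C * |t / (n + 1)|) := by gcongr; exact hloc _ hsmall
    _ = C * |t| := by rw [abs_div, abs_of_pos hn]; field_simp

lemma abs_sub_le_of_subadditive (hsub : ∀ a b, φ (a + b) ≤ φ a + φ b) {C : ℝ}
    (hC : ∀ t, φ t ≤ C * |t|) (x y : ℝ) : |φ x - φ y| ≤ C * |x - y| := by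
  have hx := hsub y (x - y)
  have hy := hsub x (y - x)
  rw [add_sub_cancel] at hx hy
  rw [abs_sub_le_iff]
  constructor
  · linarith [hC (x - y)]
  · rw [abs_sub_comm]; linarith [hC (y - x)]

end

theorem stmt14_general (f : ℝ) (π : ℝ → ℝ)
    (hπ : MinimalValid f π) (hcpl : ContPiecewiseLinear π)
    (π' : ℝ → ℝ) (hπ' : MinimalValid f π') (hE : Eset π ⊆ Eset π') :
    ∃ L : ℝ, 0 ≤ L ∧ ∀ x y : ℝ, |π' x - π' y| ≤ L * |x - y| := by
  obtain ⟨ε, hε, ⟨a, b, hright⟩, ⟨a', b', hleft⟩⟩ := hcpl.exists_eqOn_affine_Icc 0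
  rw [zero_add] at hright
  rw [zero_sub] at hleft
  have hright' := mem_Eset_of_eqOn_affine hright ⟨le_rfl, hε.le⟩ hπ.map_zero
  have hleft' := mem_Eset_of_eqOn_affine hleft ⟨by linarith, le_rfl⟩ hπ.map_zero
  obtain ⟨C, hC, hloc⟩ := exists_le_mul_abs_of_additiveOn_Icc hε hπ'.1.1
    (fun x hx y hy hxy => (hE (hright' x hx y hy hxy)).symm)
    (fun x hx y hy hxy => (hE (hleft' x hx y hy hxy)).symm)
  exact ⟨C, hC, abs_sub_le_of_subadditive hπ'.map_add_le
    (le_mul_abs_of_subadditive hπ'.map_add_le hε hloc)⟩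

theorem stmt14 (f : ℝ) (hf : f ∈ Set.Ioo (0 : ℝ) 1) (π : ℝ → ℝ)
    (hπ : MinimalValid f π) (hcpl : ContPiecewiseLinear π)
    (π' : ℝ → ℝ) (hπ' : MinimalValid f π') (hE : Eset π ⊆ Eset π') :
    ∃ L : ℝ, 0 ≤ L ∧ ∀ x y : ℝ, |π' x - π' y| ≤ L * |x - y| :=
  stmt14_general f π hπ hcpl π' hπ' hE
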